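/- Let ρ > 0, ϑ > 0, λ₁⁺, λ₂⁺, λ₁⁻, λ₂⁻ > 0, and π ∈ [0, 1]. Write λ̄⁺ = πλ₁⁺ + (1−π)λ₂⁺ and λ̄⁻ = πλ₁⁻ + (1−π)λ₂⁻, and define h*(π) = (λ̄⁺+λ̄⁻)/(2ρ) − sqrt( ((λ̄⁺+λ̄⁻)/(2ρ) + 1/ϑ)² − 2λ̄⁺/(ϑρ) ). Then −1/ϑ < h*(π) < 1/ϑ, h*(π) satisfies λ̄⁺ϑ/(1+h*(π)ϑ) − λ̄⁻ϑ/(1−h*(π)ϑ) = ρ, and h*(π) is the unique global maximizer on (−1/ϑ, 1/ϑ) of the strictly concave function φ_π(h) = (1−h)ρ + λ̄⁺ log(1+hϑ) + λ̄⁻ log(1−hϑ). -/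

import Mathlib

/-!
Clearing denominators in the first-order condition `λ̄⁺ϑ/(1+hϑ) − λ̄⁻ϑ/(1−hϑ) = ρ` gives the
quadratic `ρϑ²h² − (λ̄⁺+λ̄⁻)ϑ²h + (λ̄⁺−λ̄⁻)ϑ − ρ = 0`, and `h*` is its smaller root. With
`S = (λ̄⁺+λ̄⁻)/(2ρ)` the radicand equals both `(S + 1/ϑ)² − 2λ̄⁺/(ϑρ)` and
`(S − 1/ϑ)² + 2λ̄⁻/(ϑρ)`, which yields `|h*| < 1/ϑ`. At a point satisfying the first-order
condition, the tangent inequality `log x ≤ x − 1` applied to `(1 ± hϑ)/(1 ± h*ϑ)` shows that `φ_π`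
is maximal there, and strict concavity makes the maximizer unique.
-/

open Set

section StrictConcavity

variable {𝕜 β : Type*} [Field 𝕜] [LinearOrder 𝕜] [IsStrictOrderedRing 𝕜]
  [AddCommMonoid β] [PartialOrder β] [Module 𝕜 β]

theorem StrictConcaveOn.comp_add_mul {s : Set 𝕜} {f : 𝕜 → β} (hf : StrictConcaveOn 𝕜 s f)
    (α : 𝕜) {c : 𝕜} (hc : c ≠ 0) :
    StrictConcaveOn 𝕜 ((fun x => α + x * c) ⁻¹' s) fun x => f (α + x * c) := by
  have hcombo : ∀ {a b : 𝕜}, a + b = 1 → ∀ x y : 𝕜,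
      α + (a • x + b • y) * c = a • (α + x * c) + b • (α + y * c) := by
    intro a b hab x y
    simp only [smul_eq_mul]
    linear_combination α * hab.symm
  refine ⟨fun x hx y hy a b ha hb hab => ?_, fun x hx y hy hxy a b ha hb hab => ?_⟩
  · simpa only [mem_preimage, hcombo hab] using hf.1 hx hy ha hb hab
  · have hne : α + x * c ≠ α + y * c := fun h => hxy (mul_right_cancel₀ hc (add_left_cancel h))
    simpa only [hcombo hab] using hf.2 hx hy hne ha hb hab

theorem StrictConcaveOn.lt_of_isMaxOn {E : Type*} [AddCommMonoid E] [SMul 𝕜 E]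
    [IsOrderedAddMonoid β] [PosSMulMono 𝕜 β] {s : Set E} {f : E → β} {x y : E}
    (hf : StrictConcaveOn 𝕜 s f) (hfx : IsMaxOn f s x) (hx : x ∈ s) (hy : y ∈ s) (hyx : y ≠ x) :
    f y < f x :=
  (hfx hy).lt_of_ne fun hfyx => hyx <|
    hf.eq_of_isMaxOn (fun _ hz => hfyx ▸ hfx hz) hfx hy hx

theorem StrictConcaveOn.const_mul {E : Type*} [AddCommMonoid E] [SMul 𝕜 E] {s : Set E}
    {f : E → 𝕜} (hf : StrictConcaveOn 𝕜 s f) {c : 𝕜} (hc : 0 < c) :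
    StrictConcaveOn 𝕜 s fun x => c * f x :=
  ⟨hf.1, fun x hx y hy hxy a b ha hb hab => by
    have := mul_lt_mul_of_pos_left (hf.2 hx hy hxy ha hb hab) hc
    simp only [smul_eq_mul] at this ⊢
    linear_combination this⟩

theorem concaveOn_one_sub_mul {s : Set 𝕜} (hs : Convex 𝕜 s) (ρ : 𝕜) :
    ConcaveOn 𝕜 s fun h => (1 - h) * ρ :=
  ⟨hs, fun x _ y _ a b _ _ hab => le_of_eq <| by
    simp only [smul_eq_mul]
    linear_combination ρ * hab⟩

end StrictConcavity

theorem mem_Ioo_neg_inv_iff {ϑ h : ℝ} (hϑ : 0 < ϑ) :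
    h ∈ Ioo (-(1 / ϑ)) (1 / ϑ) ↔ 0 < 1 + h * ϑ ∧ 0 < 1 - h * ϑ := by
  rw [mem_Ioo, neg_lt, lt_div_iff₀ hϑ, lt_div_iff₀ hϑ]
  constructor <;> rintro ⟨h₁, h₂⟩ <;> constructor <;> linarith

/-- The objective `φ_π`, with `a = λ̄⁺` and `b = λ̄⁻`. -/
noncomputable def logObjective (ρ ϑ a b h : ℝ) : ℝ :=
  (1 - h) * ρ + a * Real.log (1 + h * ϑ) + b * Real.log (1 - h * ϑ)

/-- The candidate `h*(π)`, with `a = λ̄⁺` and `b = λ̄⁻`. -/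
noncomputable def logOptimalStrategy (ρ ϑ a b : ℝ) : ℝ :=
  (a + b) / (2 * ρ) - √(((a + b) / (2 * ρ) + 1 / ϑ) ^ 2 - 2 * a / (ϑ * ρ))

section LogObjective

open Real

variable {ρ ϑ a b : ℝ}

theorem strictConcaveOn_logObjective (hϑ : 0 < ϑ) (ha : 0 < a) (hb : 0 < b) :
    StrictConcaveOn ℝ (Ioo (-(1 / ϑ)) (1 / ϑ)) (logObjective ρ ϑ a b) := by
  have hlog (c : ℝ) (hc : c ≠ 0) (hpos : ∀ h ∈ Ioo (-(1 / ϑ)) (1 / ϑ), 0 < 1 + h * c) :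
      StrictConcaveOn ℝ (Ioo (-(1 / ϑ)) (1 / ϑ)) fun h => log (1 + h * c) :=
    (strictConcaveOn_log_Ioi.comp_add_mul 1 hc).subset hpos (convex_Ioo _ _)
  have hpos (h : ℝ) (hh : h ∈ Ioo (-(1 / ϑ)) (1 / ϑ)) := (mem_Ioo_neg_inv_iff hϑ).1 hh
  have hplus : StrictConcaveOn ℝ (Ioo (-(1 / ϑ)) (1 / ϑ)) fun h => a * log (1 + h * ϑ) :=
    (hlog ϑ hϑ.ne' fun h hh => (hpos h hh).1).const_mul ha
  have hminus : StrictConcaveOn ℝ (Ioo (-(1 / ϑ)) (1 / ϑ)) fun h => b * log (1 - h * ϑ) := by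
    have := (hlog (-ϑ) (neg_ne_zero.2 hϑ.ne') fun h hh => by
      simpa only [mul_neg, ← sub_eq_add_neg] using (hpos h hh).2).const_mul hb
    simpa only [mul_neg, ← sub_eq_add_neg] using this
  exact ((concaveOn_one_sub_mul (convex_Ioo _ _) ρ).add_strictConcaveOn hplus).add hminus

theorem isMaxOn_logObjective_of_foc (hϑ : 0 < ϑ) (ha : 0 ≤ a) (hb : 0 ≤ b) {h₀ : ℝ}
    (h₀_mem : h₀ ∈ Ioo (-(1 / ϑ)) (1 / ϑ))
    (hfoc : a * ϑ / (1 + h₀ * ϑ) - b * ϑ / (1 - h₀ * ϑ) = ρ) :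
    IsMaxOn (logObjective ρ ϑ a b) (Ioo (-(1 / ϑ)) (1 / ϑ)) h₀ := by
  intro h hh
  obtain ⟨hP, hM⟩ := (mem_Ioo_neg_inv_iff hϑ).1 hh
  obtain ⟨hP₀, hM₀⟩ := (mem_Ioo_neg_inv_iff hϑ).1 h₀_mem
  have hlogP := log_le_sub_one_of_pos (div_pos hP hP₀)
  have hlogM := log_le_sub_one_of_pos (div_pos hM hM₀)
  rw [log_div hP.ne' hP₀.ne'] at hlogP
  rw [log_div hM.ne' hM₀.ne'] at hlogM
  have htangent : a * ((1 + h * ϑ) / (1 + h₀ * ϑ) - 1)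
      + b * ((1 - h * ϑ) / (1 - h₀ * ϑ) - 1) = (h - h₀) * ρ := by
    rw [← hfoc, div_sub_one hP₀.ne', div_sub_one hM₀.ne']
    ring
  show logObjective ρ ϑ a b h ≤ logObjective ρ ϑ a b h₀
  unfold logObjective
  linarith [mul_le_mul_of_nonneg_left hlogP ha, mul_le_mul_of_nonneg_left hlogM hb]

theorem logOptimalStrategy_radicand_eq (hρ : ρ ≠ 0) (hϑ : ϑ ≠ 0) :
    ((a + b) / (2 * ρ) + 1 / ϑ) ^ 2 - 2 * a / (ϑ * ρ)
      = ((a + b) / (2 * ρ) - 1 / ϑ) ^ 2 + 2 * b / (ϑ * ρ) := by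
  field_simp
  ring

theorem logOptimalStrategy_mem_Ioo (hρ : 0 < ρ) (hϑ : 0 < ϑ) (ha : 0 < a) (hb : 0 < b) :
    logOptimalStrategy ρ ϑ a b ∈ Ioo (-(1 / ϑ)) (1 / ϑ) := by
  have hradicand := logOptimalStrategy_radicand_eq (a := a) (b := b) hρ.ne' hϑ.ne'
  set S := (a + b) / (2 * ρ)
  have hsqrt_lt : √((S + 1 / ϑ) ^ 2 - 2 * a / (ϑ * ρ)) < S + 1 / ϑ := by
    rw [sqrt_lt' (by positivity)]
    linarith [show 0 < 2 * a / (ϑ * ρ) by positivity]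
  have hlt_sqrt : S - 1 / ϑ < √((S + 1 / ϑ) ^ 2 - 2 * a / (ϑ * ρ)) := by
    refine lt_sqrt_of_sq_lt ?_
    linarith [show 0 < 2 * b / (ϑ * ρ) by positivity]
  constructor <;> simp only [logOptimalStrategy] <;> linarith

theorem logOptimalStrategy_foc (hρ : 0 < ρ) (hϑ : 0 < ϑ) (ha : 0 < a) (hb : 0 < b) :
    a * ϑ / (1 + logOptimalStrategy ρ ϑ a b * ϑ) - b * ϑ / (1 - logOptimalStrategy ρ ϑ a b * ϑ)
      = ρ := by
  obtain ⟨hP, hM⟩ := (mem_Ioo_neg_inv_iff hϑ).1 (logOptimalStrategy_mem_Ioo hρ hϑ ha hb)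
  set h := logOptimalStrategy ρ ϑ a b with hdef
  have hroot : ((a + b) / (2 * ρ) - h) ^ 2 = ((a + b) / (2 * ρ) + 1 / ϑ) ^ 2 - 2 * a / (ϑ * ρ) := by
    rw [hdef, logOptimalStrategy, sub_sub_cancel, sq_sqrt]
    rw [logOptimalStrategy_radicand_eq hρ.ne' hϑ.ne']
    positivity
  have hquad : ρ * ϑ ^ 2 * h ^ 2 - (a + b) * ϑ ^ 2 * h + (a - b) * ϑ - ρ = 0 := by
    linear_combination (norm := skip) (ρ * ϑ ^ 2) * hroot
    field_simp
    ring
  rw [div_sub_div _ _ hP.ne' hM.ne', div_eq_iff (mul_pos hP hM).ne']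
  linear_combination hquad

end LogObjective

/-- Partial information, two-state example: with filtered intensities
`λ̄⁺ = πλ₁⁺ + (1−π)λ₂⁺` and `λ̄⁻ = πλ₁⁻ + (1−π)λ₂⁻`, the explicit strategy
`h*(π) = (λ̄⁺+λ̄⁻)/(2ρ) − sqrt(((λ̄⁺+λ̄⁻)/(2ρ) + 1/ϑ)² − 2λ̄⁺/(ϑρ))` lies in
`(−1/ϑ, 1/ϑ)`, satisfies the filtered first-order condition, and is the unique global
maximizer on `(−1/ϑ, 1/ϑ)` of the strictly concave filtered log-utility objective
`φ_π(h) = (1−h)ρ + λ̄⁺ log(1+hϑ) + λ̄⁻ log(1−hϑ)`. -/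
theorem filtered_two_state_optimal_strategy
    (ρ ϑ l1p l2p l1m l2m π : ℝ) (hρ : 0 < ρ) (hϑ : 0 < ϑ)
    (h1p : 0 < l1p) (h2p : 0 < l2p) (h1m : 0 < l1m) (h2m : 0 < l2m)
    (hπ : π ∈ Set.Icc (0 : ℝ) 1)
    (lbp lbm : ℝ)
    (hbp : lbp = π * l1p + (1 - π) * l2p)
    (hbm : lbm = π * l1m + (1 - π) * l2m)
    (hstar : ℝ)
    (hdef : hstar = (lbp + lbm) / (2 * ρ) -
      Real.sqrt (((lbp + lbm) / (2 * ρ) + 1 / ϑ) ^ 2 - 2 * lbp / (ϑ * ρ))) :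
    (-(1 / ϑ) < hstar ∧ hstar < 1 / ϑ) ∧
    lbp * ϑ / (1 + hstar * ϑ) - lbm * ϑ / (1 - hstar * ϑ) = ρ ∧
    StrictConcaveOn ℝ (Set.Ioo (-(1 / ϑ)) (1 / ϑ))
      (fun h => (1 - h) * ρ + lbp * Real.log (1 + h * ϑ) + lbm * Real.log (1 - h * ϑ)) ∧
    ∀ h ∈ Set.Ioo (-(1 / ϑ)) (1 / ϑ), h ≠ hstar →
      (1 - h) * ρ + lbp * Real.log (1 + h * ϑ) + lbm * Real.log (1 - h * ϑ) <
      (1 - hstar) * ρ + lbp * Real.log (1 + hstar * ϑ) + lbm * Real.log (1 - hstar * ϑ) := by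
  have hfiltered_pos {t x y : ℝ} (ht : t ∈ Icc (0 : ℝ) 1) (hx : 0 < x) (hy : 0 < y) :
      0 < t * x + (1 - t) * y :=
    convex_Ioi (0 : ℝ) hx hy ht.1 (sub_nonneg.2 ht.2) (add_sub_cancel _ _)
  have ha : 0 < lbp := hbp ▸ hfiltered_pos hπ h1p h2p
  have hb : 0 < lbm := hbm ▸ hfiltered_pos hπ h1m h2m
  obtain rfl : hstar = logOptimalStrategy ρ ϑ lbp lbm := hdef
  have hmem := logOptimalStrategy_mem_Ioo hρ hϑ ha hb
  have hfoc := logOptimalStrategy_foc hρ hϑ ha hb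
  have hconcave := strictConcaveOn_logObjective (ρ := ρ) hϑ ha hb
  exact ⟨hmem, hfoc, hconcave, fun h hh hne =>
    hconcave.lt_of_isMaxOn (isMaxOn_logObjective_of_foc hϑ ha.le hb.le hmem hfoc) hmem hh hne⟩
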